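/- Define v_{k,n} := sum over i from n+1 to n+k of [ -C(n-i, i) * C(n+k+i, 2i+1) + C(n-i, i-1) * C(n+k+i, 2i) ] with generalized binomial coefficients. Then for every positive integer k and every integer h ≤ -1, v_{k, h} = 0. -/

import Mathlib

open Finset

/-- Generalized binomial coefficient: classical for nonnegative upper index,
`(-1)^k * C(k-m-1, k)` for negative upper index, and `0` for negative lower index. -/
def gchoose (m k : ℤ) : ℤ :=
  if k < 0 then 0
  else if m < 0 then (-1) ^ k.toNat * ((k - m - 1).toNat.choose k.toNat : ℤ)
  else (m.toNat.choose k.toNat : ℤ)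

/-- The double sequence `v_{k,n}`. -/
noncomputable def vseq (k n : ℤ) : ℤ :=
  ∑ i ∈ Finset.Icc (n + 1) (n + k),
    (-(gchoose (n - i) i * gchoose (n + k + i) (2 * i + 1))
      + gchoose (n - i) (i - 1) * gchoose (n + k + i) (2 * i))

/-!
Pascal's rule `C(m + 1, j + 1) = C(m, j) + C(m, j + 1)` holds for the generalized binomial
coefficients at all integer indices, since for `j ≥ 0` they are `Ring.choose`. Applied to both
factors of the summand it makes `v_{k,n} - v_{k-1,n} + v_{k,n-1}` a telescoping sum, whose
boundary terms vanish for `n < 0` because a negative lower index gives `0`. As `v_{0,n} = 0` and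
`v_{k,n} = 0` once `n + k < 0`, induction on `k` and then upwards on `n` gives `v_{k,n} = 0`.
-/

lemma gchoose_of_neg {m j : ℤ} (hj : j < 0) : gchoose m j = 0 := by
  simp [gchoose, hj]

lemma gchoose_natCast (m : ℤ) (j : ℕ) : gchoose m j = Ring.choose m j := by
  rw [gchoose, if_neg (by omega), Int.toNat_natCast]
  split_ifs with hm
  · obtain ⟨r, rfl⟩ : ∃ r : ℕ, m = -(r : ℤ) := ⟨(-m).toNat, by omega⟩
    rw [Ring.choose_neg, show (r : ℤ) + j - 1 = ((r + j - 1 : ℕ) : ℤ) by omega,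
      show (j : ℤ) - -r - 1 = ((r + j - 1 : ℕ) : ℤ) by omega, Int.toNat_natCast,
      Ring.choose_natCast, Int.negOnePow_def, Units.smul_def]
    simp
  · obtain ⟨r, rfl⟩ : ∃ r : ℕ, m = r := ⟨m.toNat, by omega⟩
    rw [Int.toNat_natCast, Ring.choose_natCast]

lemma gchoose_succ_succ (m j : ℤ) :
    gchoose (m + 1) (j + 1) = gchoose m j + gchoose m (j + 1) := by
  rcases lt_trichotomy j (-1) with hj | rfl | hj
  · have hj' : j + 1 < 0 := by omega
    rw [gchoose_of_neg hj', gchoose_of_neg (by omega : j < 0), gchoose_of_neg hj',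
      add_zero]
  · simp [gchoose]
  · obtain ⟨t, rfl⟩ : ∃ t : ℕ, j = t := ⟨j.toNat, by omega⟩
    rw [← Nat.cast_succ, gchoose_natCast, gchoose_natCast, gchoose_natCast]
    exact Ring.choose_succ_succ m t

lemma gchoose_self {m : ℤ} (hm : 0 ≤ m) : gchoose m m = 1 := by
  lift m to ℕ using hm
  rw [gchoose_natCast, Ring.choose_natCast, Nat.choose_self, Nat.cast_one]

lemma gchoose_eq_zero_of_lt {m j : ℤ} (hm : 0 ≤ m) (hmj : m < j) : gchoose m j = 0 := by
  lift m to ℕ using hm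
  lift j to ℕ using by omega
  rw [gchoose_natCast, Ring.choose_natCast, Nat.choose_eq_zero_of_lt (by omega), Nat.cast_zero]

lemma Finset.sum_Icc_sub_add_one {M : Type*} [AddCommGroup M] (f : ℤ → M) {a b : ℤ}
    (hab : a ≤ b + 1) : ∑ i ∈ Icc a b, (f i - f (i + 1)) = f a - f (b + 1) := by
  induction b, (by omega : a - 1 ≤ b) using Int.leInduction with
  | base => simp
  | succ b hb ih =>
    rw [← insert_Icc_right_eq_Icc_add_one (by omega), sum_insert (by simp), ih (by omega)]
    abel

def vterm (k n i : ℤ) : ℤ :=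
  -(gchoose (n - i) i * gchoose (n + k + i) (2 * i + 1))
    + gchoose (n - i) (i - 1) * gchoose (n + k + i) (2 * i)

lemma vseq_eq_sum_vterm (k n : ℤ) : vseq k n = ∑ i ∈ Icc (n + 1) (n + k), vterm k n i := rfl

def wterm (k n i : ℤ) : ℤ :=
  gchoose (n - i) (i - 1) * gchoose (n + k + i - 1) (2 * i - 1)

lemma vterm_add_vterm_sub_vterm (k n i : ℤ) :
    vterm k n i + vterm k (n - 1) i - vterm (k - 1) n i = wterm k n i - wterm k n (i + 1) := by
  have pascal_odd := gchoose_succ_succ (n + k + i - 1) (2 * i)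
  have pascal_even := gchoose_succ_succ (n + k + i - 1) (2 * i - 1)
  have pascal_upper := gchoose_succ_succ (n - 1 - i) (i - 1)
  simp only [vterm, wterm]
  linear_combination (norm := ring_nf)
    (gchoose (n - 1 - i) i - gchoose (n - i) i) * pascal_odd
      + gchoose (n - i) (i - 1) * pascal_even - gchoose (n + k + i - 1) (2 * i) * pascal_upper

lemma vterm_add_eq_wterm_add (k n : ℤ) : vterm k n (n + k) = wterm k n (n + k) := by
  simp only [vterm, wterm]
  rw [show n - (n + k) = -k by ring]
  generalize n + k = N
  have top_vanishes : gchoose (-k) N * gchoose (N + N) (2 * N + 1) = 0 := by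
    rcases lt_or_ge N 0 with hN | hN
    · rw [gchoose_of_neg hN, zero_mul]
    · rw [gchoose_eq_zero_of_lt (m := N + N) (by omega) (by omega), mul_zero]
  rcases le_or_gt N 0 with hN | hN
  · rw [top_vanishes, gchoose_of_neg (by omega : N - 1 < 0)]; ring
  · rw [top_vanishes, ← two_mul, gchoose_self (by omega), gchoose_self (by omega)]
    ring

lemma vseq_sub_add_vseq_eq_zero {k n : ℤ} (hk : 1 ≤ k) (hn : n < 0) :
    vseq k n - vseq (k - 1) n + vseq k (n - 1) = 0 := by
  have top : Icc (n + 1) (n + k) = insert (n + k) (Icc (n + 1) (n + k - 1)) := by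
    ext; simp only [mem_Icc, mem_insert]; omega
  have bottom : Icc (n - 1 + 1) (n - 1 + k) = insert n (Icc (n + 1) (n + k - 1)) := by
    ext; simp only [mem_Icc, mem_insert]; omega
  have middle : Icc (n + 1) (n + (k - 1)) = Icc (n + 1) (n + k - 1) := by
    rw [add_sub_assoc]
  have telescope : ∑ i ∈ Icc (n + 1) (n + k - 1),
      (vterm k n i + vterm k (n - 1) i - vterm (k - 1) n i)
        = wterm k n (n + 1) - wterm k n (n + k) := by
    rw [sum_congr rfl fun i _ => vterm_add_vterm_sub_vterm k n i,
      sum_Icc_sub_add_one _ (by omega), sub_add_cancel]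
  have vterm_pred : vterm k (n - 1) n = 0 := by
    simp only [vterm, gchoose_of_neg hn, gchoose_of_neg (by omega : n - 1 < 0)]; ring
  have wterm_succ : wterm k n (n + 1) = 0 := by
    simp only [wterm, add_sub_cancel_right, gchoose_of_neg hn, zero_mul]
  rw [vseq_eq_sum_vterm, vseq_eq_sum_vterm, vseq_eq_sum_vterm, top, bottom, middle,
    sum_insert (by simp), sum_insert (by simp)]
  rw [sum_sub_distrib, sum_add_distrib] at telescope
  linarith [vterm_add_eq_wterm_add k n]

lemma vseq_zero_left (n : ℤ) : vseq 0 n = 0 := by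
  rw [vseq, Icc_eq_empty (by omega), sum_empty]

lemma vseq_eq_zero_of_add_neg {k n : ℤ} (h : n + k < 0) : vseq k n = 0 :=
  sum_eq_zero fun i hi => by
    rw [mem_Icc] at hi
    rw [gchoose_of_neg (by omega : i < 0), gchoose_of_neg (by omega : i - 1 < 0)]
    ring

theorem stmt_12 (k h : ℤ) (hk : 1 ≤ k) (hh : h ≤ -1) : vseq k h = 0 := by
  replace hk : 0 ≤ k := by omega
  induction k, hk using Int.leInduction generalizing h with
  | base => exact vseq_zero_left h
  | succ k _ ihk =>
    rcases lt_or_ge h (-k - 2) with hlow | hhigh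
    · exact vseq_eq_zero_of_add_neg (by omega)
    induction h, hhigh using Int.leInduction with
    | base => exact vseq_eq_zero_of_add_neg (by omega)
    | succ h _ ihh =>
      have hrec := vseq_sub_add_vseq_eq_zero (k := k + 1) (n := h + 1) (by omega) (by omega)
      rw [add_sub_cancel_right, add_sub_cancel_right, ihk (h + 1) hh, ihh (by omega)] at hrec
      linarith
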